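/- Fix an integer m ≥ 2. Let P be the square integer matrix of size 2(m−1), regarded as an (m−1)×(m−1) block matrix with 2×2 blocks, whose (k,k) block is 3A_0, whose (k,k+1) block is −A_1, whose (k+1,k) block is −A_1ᵀ, and all other blocks zero, where A_r is the 2×2 matrix with rows (0, 2^r) and (1, 0). Then the cokernel ℤ^{2(m−1)} / P·ℤ^{2(m−1)} of P, i.e. the quotient of ℤ^{2(m−1)} by the subgroup generated by the columns of P, is isomorphic as an abelian group to (ℤ/(2^m − 1)ℤ) ⊕ (ℤ/(2^m − 1)ℤ). -/
import Mathlib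


open Matrix

/-- The `2×2` integer matrix `A_r` with rows `(0, 2^r)` and `(1, 0)`. -/
def matA (r : ℕ) : Matrix (Fin 2) (Fin 2) ℤ := !![0, 2 ^ r; 1, 0]

/-- The block tridiagonal linking matrix `P` of size `2(m-1)`: the `(k,k)` block is
`3·A_0`, the `(k,k+1)` block is `-A_1`, the `(k+1,k)` block is `-A_1ᵀ`, and all other
blocks are zero.  (Blocks are indexed by `Fin (m-1)`, zero-based.) -/
def matP (m : ℕ) : Matrix (Fin (m - 1) × Fin 2) (Fin (m - 1) × Fin 2) ℤ :=
  fun p q =>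
    (if (p.1 : ℕ) = (q.1 : ℕ) then (3 : ℤ) • matA 0
     else if (q.1 : ℕ) = (p.1 : ℕ) + 1 then -matA 1
     else if (p.1 : ℕ) = (q.1 : ℕ) + 1 then -(matA 1)ᵀ
     else 0) p.2 q.2

namespace CokerP

@[simp] lemma matA_00 (r : ℕ) : matA r 0 0 = 0 := rfl
@[simp] lemma matA_01 (r : ℕ) : matA r 0 1 = 2 ^ r := rfl
@[simp] lemma matA_10 (r : ℕ) : matA r 1 0 = 1 := rfl
@[simp] lemma matA_11 (r : ℕ) : matA r 1 1 = 0 := rfl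

lemma matP_apply (m : ℕ) (k l : Fin (m-1)) (i j : Fin 2) :
    matP m (k, i) (l, j) =
      if (k : ℕ) = (l : ℕ) then ((3 : ℤ) • matA 0) i j
      else if (l : ℕ) = (k : ℕ) + 1 then (-matA 1) i j
      else if (k : ℕ) = (l : ℕ) + 1 then (-(matA 1)ᵀ) i j
      else 0 := by
  unfold matP
  split_ifs <;> rfl

-- sum helpers
lemma sum_diag {n : ℕ} (k : Fin n) (f : Fin n → ℤ) :
    (∑ l : Fin n, if (k : ℕ) = (l : ℕ) then f l else 0) = f k := by
  have : ∀ l : Fin n, (if (k : ℕ) = (l : ℕ) then f l else 0) = if l = k then f l else 0 := by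
    intro l
    congr 1
    simp [Fin.val_inj, eq_comm]
  simp_rw [this]
  simp

lemma sum_succ {n : ℕ} (k : Fin n) (f : ℕ → ℤ) :
    (∑ l : Fin n, if (l : ℕ) = (k : ℕ) + 1 then f l else 0)
      = if (k : ℕ) + 1 < n then f ((k : ℕ) + 1) else 0 := by
  by_cases h : (k : ℕ) + 1 < n
  · rw [if_pos h]
    have : ∀ l : Fin n, (if (l : ℕ) = (k : ℕ) + 1 then f l else 0)
        = if l = ⟨(k : ℕ) + 1, h⟩ then f l else 0 := by
      intro l; congr 1; simp [Fin.ext_iff]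
    simp_rw [this, Finset.sum_ite_eq' Finset.univ, Finset.mem_univ, if_pos]
  · rw [if_neg h]
    apply Finset.sum_eq_zero
    intro l _
    rw [if_neg]
    have := l.isLt
    omega

lemma sum_pred {n : ℕ} (k : Fin n) (f : ℕ → ℤ) :
    (∑ l : Fin n, if (k : ℕ) = (l : ℕ) + 1 then f l else 0)
      = if (k : ℕ) = 0 then 0 else f ((k : ℕ) - 1) := by
  by_cases h : (k : ℕ) = 0
  · rw [if_pos h]
    apply Finset.sum_eq_zero
    intro l _
    rw [if_neg]
    omega
  · rw [if_neg h]
    have hlt : (k : ℕ) - 1 < n := by have := k.isLt; omega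
    have : ∀ l : Fin n, (if (k : ℕ) = (l : ℕ) + 1 then f l else 0)
        = if l = ⟨(k : ℕ) - 1, hlt⟩ then f l else 0 := by
      intro l; congr 1; simp [Fin.ext_iff]; omega
    simp_rw [this, Finset.sum_ite_eq' Finset.univ, Finset.mem_univ, if_pos]


def iota (m : ℕ) (j₀ : Fin 2) (a : ℕ → ℤ) : Fin (m-1) × Fin 2 → ℤ :=
  fun p => if p.2 = j₀ then a (p.1 : ℕ) else 0

lemma mulVec_iota1_0 (m : ℕ) (a : ℕ → ℤ) (k : Fin (m-1)) :
    (matP m *ᵥ iota m 1 a) (k, 0)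
      = 3 * a (k : ℕ) - 2 * (if (k : ℕ) + 1 < m - 1 then a ((k : ℕ) + 1) else 0)
        - (if (k : ℕ) = 0 then 0 else a ((k : ℕ) - 1)) := by
  have h1 : (matP m *ᵥ iota m 1 a) (k, 0) = ∑ l : Fin (m-1), matP m (k,0) (l,1) * a (l : ℕ) := by
    simp only [Matrix.mulVec, dotProduct, Fintype.sum_prod_type, Fin.sum_univ_two]
    simp [iota]
  rw [h1]
  have hsplit : ∀ l : Fin (m-1), matP m (k,0) (l,1) * a (l : ℕ) =
      (if (k:ℕ) = (l:ℕ) then 3 * a (l:ℕ) else 0)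
      + ((if (l:ℕ) = (k:ℕ)+1 then (-2) * a (l:ℕ) else 0)
      + (if (k:ℕ) = (l:ℕ)+1 then (-1) * a (l:ℕ) else 0)) := by
    intro l
    rw [matP_apply]
    split_ifs with h1 h2 h3 <;>
      simp [Matrix.smul_apply, Matrix.neg_apply, Matrix.transpose_apply] <;> omega
  simp_rw [hsplit]
  rw [Finset.sum_add_distrib, Finset.sum_add_distrib, sum_diag,
    sum_succ k (fun t => (-2) * a t), sum_pred k (fun t => (-1) * a t)]
  split_ifs <;> ring

lemma mulVec_iota1_1 (m : ℕ) (a : ℕ → ℤ) (k : Fin (m-1)) :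
    (matP m *ᵥ iota m 1 a) (k, 1) = 0 := by
  have h1 : (matP m *ᵥ iota m 1 a) (k, 1) = ∑ l : Fin (m-1), matP m (k,1) (l,1) * a (l : ℕ) := by
    simp only [Matrix.mulVec, dotProduct, Fintype.sum_prod_type, Fin.sum_univ_two]
    simp [iota]
  rw [h1]
  apply Finset.sum_eq_zero
  intro l _
  rw [matP_apply]
  split_ifs <;> simp [Matrix.smul_apply, Matrix.neg_apply, Matrix.transpose_apply]

lemma mulVec_iota0_1 (m : ℕ) (a : ℕ → ℤ) (k : Fin (m-1)) :
    (matP m *ᵥ iota m 0 a) (k, 1)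
      = 3 * a (k : ℕ) - (if (k : ℕ) + 1 < m - 1 then a ((k : ℕ) + 1) else 0)
        - 2 * (if (k : ℕ) = 0 then 0 else a ((k : ℕ) - 1)) := by
  have h1 : (matP m *ᵥ iota m 0 a) (k, 1) = ∑ l : Fin (m-1), matP m (k,1) (l,0) * a (l : ℕ) := by
    simp only [Matrix.mulVec, dotProduct, Fintype.sum_prod_type, Fin.sum_univ_two]
    simp [iota]
  rw [h1]
  have hsplit : ∀ l : Fin (m-1), matP m (k,1) (l,0) * a (l : ℕ) =
      (if (k:ℕ) = (l:ℕ) then 3 * a (l:ℕ) else 0)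
      + ((if (l:ℕ) = (k:ℕ)+1 then (-1) * a (l:ℕ) else 0)
      + (if (k:ℕ) = (l:ℕ)+1 then (-2) * a (l:ℕ) else 0)) := by
    intro l
    rw [matP_apply]
    split_ifs with h1 h2 h3 <;>
      simp [Matrix.smul_apply, Matrix.neg_apply, Matrix.transpose_apply] <;> omega
  simp_rw [hsplit]
  rw [Finset.sum_add_distrib, Finset.sum_add_distrib, sum_diag,
    sum_succ k (fun t => (-1) * a t), sum_pred k (fun t => (-2) * a t)]
  split_ifs <;> ring

lemma mulVec_iota0_0 (m : ℕ) (a : ℕ → ℤ) (k : Fin (m-1)) :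
    (matP m *ᵥ iota m 0 a) (k, 0) = 0 := by
  have h1 : (matP m *ᵥ iota m 0 a) (k, 0) = ∑ l : Fin (m-1), matP m (k,0) (l,0) * a (l : ℕ) := by
    simp only [Matrix.mulVec, dotProduct, Fintype.sum_prod_type, Fin.sum_univ_two]
    simp [iota]
  rw [h1]
  apply Finset.sum_eq_zero
  intro l _
  rw [matP_apply]
  split_ifs <;> simp [Matrix.smul_apply, Matrix.neg_apply, Matrix.transpose_apply]



lemma fin2_mk0 (h : (0:ℕ) < 2) : (⟨0, h⟩ : Fin 2) = 0 := rfl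
lemma fin2_mk1 (h : (1:ℕ) < 2) : (⟨1, h⟩ : Fin 2) = 1 := rfl

lemma eq_A1 (m : ℕ) (hm : 2 ≤ m) :
    matP m *ᵥ iota m 0 (fun t => 2^(t+1) - 1)
      = ((2:ℤ)^m - 1) • Pi.single ((⟨m-2, by omega⟩ : Fin (m-1)), (1 : Fin 2)) (1:ℤ) := by
  funext p
  obtain ⟨k, j⟩ := p
  have hk := k.isLt
  fin_cases j <;> beta_reduce <;> simp only [fin2_mk0, fin2_mk1]
  · rw [mulVec_iota0_0]
    simp [Pi.single_apply, Prod.ext_iff]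
  · rw [mulVec_iota0_1]
    simp only [Pi.smul_apply, Pi.single_apply, smul_eq_mul, Prod.mk.injEq, Fin.ext_iff,
      and_true, mul_one]
    by_cases h1 : (k:ℕ)+1 < m-1
    · rw [if_pos h1, if_neg (show ¬ ((k:ℕ) = m-2) by omega)]
      by_cases h0 : (k:ℕ) = 0
      · rw [if_pos h0, h0]; norm_num
      · rw [if_neg h0]
        obtain ⟨t, h3, h2⟩ : ∃ t, (k:ℕ) - 1 = t ∧ (k:ℕ) = t + 1 := ⟨(k:ℕ)-1, rfl, by omega⟩
        rw [h3, h2]; ring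
    · rw [if_neg h1, if_pos (show (k:ℕ) = m-2 by omega)]
      by_cases h0 : (k:ℕ) = 0
      · rw [if_pos h0]
        have hm2 : m = 2 := by omega
        rw [h0, hm2]; norm_num
      · rw [if_neg h0]
        obtain ⟨t, h3, h2, h4⟩ : ∃ t, (k:ℕ) - 1 = t ∧ (k:ℕ) = t+1 ∧ m = t+3 :=
          ⟨(k:ℕ)-1, rfl, by omega, by omega⟩
        rw [h3, h2, h4]; ring

lemma eq_A2 (m : ℕ) (hm : 2 ≤ m) :
    matP m *ᵥ iota m 1 (fun t => 2^(m-1-t) - 1)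
      = ((2:ℤ)^m - 1) • Pi.single ((⟨0, by omega⟩ : Fin (m-1)), (0 : Fin 2)) (1:ℤ) := by
  funext p
  obtain ⟨k, j⟩ := p
  have hk := k.isLt
  fin_cases j <;> beta_reduce <;> simp only [fin2_mk0, fin2_mk1]
  · rw [mulVec_iota1_0]
    simp only [Pi.smul_apply, Pi.single_apply, smul_eq_mul, Prod.mk.injEq, Fin.ext_iff,
      and_true, mul_one]
    by_cases h0 : (k:ℕ) = 0
    · rw [if_pos h0, if_pos h0, h0]
      by_cases h1 : (0:ℕ)+1 < m-1
      · rw [if_pos (h0 ▸ h1)]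
        obtain ⟨t, h2, h3, h4⟩ : ∃ t, m-1-0 = t+1 ∧ m-1-(0+1) = t ∧ m = t+2 :=
          ⟨m-2, by omega, by omega, by omega⟩
        rw [h2, h3, h4]; ring
      · rw [if_neg (h0 ▸ h1)]
        have hm2 : m = 2 := by omega
        rw [hm2]; norm_num
    · rw [if_neg h0, if_neg h0]
      by_cases h1 : (k:ℕ)+1 < m-1
      · rw [if_pos h1]
        obtain ⟨t, h2, h3, h4⟩ : ∃ t, m-1-((k:ℕ)+1) = t ∧ m-1-(k:ℕ) = t+1 ∧ m-1-((k:ℕ)-1) = t+2 :=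
          ⟨m-2-(k:ℕ), by omega, by omega, by omega⟩
        rw [h2, h3, h4]; ring
      · rw [if_neg h1]
        have h2 : m-1-(k:ℕ) = 1 := by omega
        have h3 : m-1-((k:ℕ)-1) = 2 := by omega
        rw [h2, h3]; norm_num
  · rw [mulVec_iota1_1]
    simp [Pi.single_apply, Prod.ext_iff]

lemma mem_C1 (m : ℕ) (hm : 2 ≤ m) (l : Fin (m-1)) :
    Pi.single (l, (0:Fin 2)) (1:ℤ)
      - ((2:ℤ)^((l:ℕ)+1) - 1) • Pi.single ((⟨0, by omega⟩ : Fin (m-1)), (0:Fin 2)) (1:ℤ)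
      ∈ LinearMap.range (Matrix.toLin' (matP m)) := by
  refine ⟨iota m 1 (fun t => 1 - 2^((l:ℕ) - t)), ?_⟩
  rw [Matrix.toLin'_apply]
  funext p; obtain ⟨k, j⟩ := p
  have hk := k.isLt
  have hl := l.isLt
  fin_cases j <;> beta_reduce <;> simp only [fin2_mk0, fin2_mk1]
  · rw [mulVec_iota1_0]
    simp only [Pi.sub_apply, Pi.smul_apply, Pi.single_apply, smul_eq_mul, Prod.mk.injEq,
      Fin.ext_iff, and_true, mul_one]
    rcases Nat.lt_trichotomy (k:ℕ) (l:ℕ) with hlt | heq | hgt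
    · rw [if_neg (show ¬((k:ℕ) = (l:ℕ)) by omega), if_pos (show (k:ℕ)+1 < m-1 by omega)]
      by_cases h0 : (k:ℕ) = 0
      · rw [if_pos h0, if_pos h0]
        obtain ⟨e, h1, h2, h3⟩ : ∃ e, (l:ℕ) - ((k:ℕ)+1) = e ∧ (l:ℕ) - (k:ℕ) = e+1 ∧ (l:ℕ)+1 = e+2 :=
          ⟨(l:ℕ)-1, by omega, by omega, by omega⟩
        rw [h1, h2, h3]; ring
      · rw [if_neg h0, if_neg h0]
        obtain ⟨e, h1, h2, h3⟩ : ∃ e, (l:ℕ) - ((k:ℕ)+1) = e ∧ (l:ℕ) - (k:ℕ) = e+1 ∧ (l:ℕ) - ((k:ℕ)-1) = e+2 :=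
          ⟨(l:ℕ)-(k:ℕ)-1, by omega, by omega, by omega⟩
        rw [h1, h2, h3]; ring
    · rw [if_pos heq]
      by_cases h0 : (k:ℕ) = 0
      · rw [if_pos h0, if_pos h0]
        rw [show (l:ℕ) - (k:ℕ) = 0 by omega, show (l:ℕ) - ((k:ℕ)+1) = 0 by omega,
          show (l:ℕ) + 1 = 1 by omega]
        split_ifs <;> ring
      · rw [if_neg h0, if_neg h0]
        rw [show (l:ℕ) - (k:ℕ) = 0 by omega, show (l:ℕ) - ((k:ℕ)+1) = 0 by omega,
          show (l:ℕ) - ((k:ℕ)-1) = 1 by omega]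
        split_ifs <;> ring
    · rw [if_neg (show ¬((k:ℕ) = (l:ℕ)) by omega), if_neg (show ¬((k:ℕ) = 0) by omega),
        if_neg (show ¬((k:ℕ) = 0) by omega)]
      rw [show (l:ℕ) - (k:ℕ) = 0 by omega, show (l:ℕ) - ((k:ℕ)+1) = 0 by omega,
        show (l:ℕ) - ((k:ℕ)-1) = 0 by omega]
      split_ifs <;> ring
  · rw [mulVec_iota1_1]
    simp [Pi.single_apply, Prod.ext_iff]

lemma mem_C2 (m : ℕ) (hm : 2 ≤ m) (l : Fin (m-1)) :
    Pi.single (l, (1:Fin 2)) (1:ℤ)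
      - ((2:ℤ)^(m-1-(l:ℕ)) - 1) • Pi.single ((⟨m-2, by omega⟩ : Fin (m-1)), (1:Fin 2)) (1:ℤ)
      ∈ LinearMap.range (Matrix.toLin' (matP m)) := by
  refine ⟨iota m 0 (fun t => 1 - 2^(t - (l:ℕ))), ?_⟩
  rw [Matrix.toLin'_apply]
  funext p; obtain ⟨k, j⟩ := p
  have hk := k.isLt
  have hl := l.isLt
  fin_cases j <;> beta_reduce <;> simp only [fin2_mk0, fin2_mk1]
  · rw [mulVec_iota0_0]
    simp [Pi.single_apply, Prod.ext_iff]
  · rw [mulVec_iota0_1]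
    simp only [Pi.sub_apply, Pi.smul_apply, Pi.single_apply, smul_eq_mul, Prod.mk.injEq,
      Fin.ext_iff, and_true, mul_one]
    rcases Nat.lt_trichotomy (k:ℕ) (l:ℕ) with hlt | heq | hgt
    · rw [if_neg (show ¬((k:ℕ) = (l:ℕ)) by omega), if_neg (show ¬((k:ℕ) = m-2) by omega)]
      rw [show (k:ℕ) - (l:ℕ) = 0 by omega, show (k:ℕ)+1 - (l:ℕ) = 0 by omega,
        show (k:ℕ)-1 - (l:ℕ) = 0 by omega]
      split_ifs <;> ring
    · by_cases h1 : (k:ℕ)+1 < m-1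
      · rw [if_pos heq, if_neg (show ¬((k:ℕ) = m-2) by omega), if_pos h1]
        rw [show (k:ℕ) - (l:ℕ) = 0 by omega, show (k:ℕ)+1 - (l:ℕ) = 1 by omega,
          show (k:ℕ)-1 - (l:ℕ) = 0 by omega]
        split_ifs <;> ring
      · rw [if_pos heq, if_pos (show (k:ℕ) = m-2 by omega), if_neg h1]
        rw [show (k:ℕ) - (l:ℕ) = 0 by omega, show (k:ℕ)-1 - (l:ℕ) = 0 by omega,
          show m-1-(l:ℕ) = 1 by omega]
        split_ifs <;> ring
    · by_cases h1 : (k:ℕ)+1 < m-1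
      · rw [if_neg (show ¬((k:ℕ) = (l:ℕ)) by omega), if_neg (show ¬((k:ℕ) = m-2) by omega),
          if_pos h1, if_neg (show ¬((k:ℕ) = 0) by omega)]
        obtain ⟨e, h2, h3, h4⟩ : ∃ e, (k:ℕ)-1 - (l:ℕ) = e ∧ (k:ℕ) - (l:ℕ) = e+1 ∧ (k:ℕ)+1 - (l:ℕ) = e+2 :=
          ⟨(k:ℕ)-1-(l:ℕ), by omega, by omega, by omega⟩
        rw [h2, h3, h4]; ring
      · rw [if_neg (show ¬((k:ℕ) = (l:ℕ)) by omega), if_pos (show (k:ℕ) = m-2 by omega),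
          if_neg h1, if_neg (show ¬((k:ℕ) = 0) by omega)]
        obtain ⟨e, h2, h3, h4⟩ : ∃ e, (k:ℕ)-1 - (l:ℕ) = e ∧ (k:ℕ) - (l:ℕ) = e+1 ∧ m-1 - (l:ℕ) = e+2 :=
          ⟨(k:ℕ)-1-(l:ℕ), by omega, by omega, by omega⟩
        rw [h2, h3, h4]; ring

lemma Psymm (m : ℕ) : (matP m)ᵀ = matP m := by
  have hd : ∀ a b : Fin 2, ((3:ℤ) • matA 0) a b = ((3:ℤ) • matA 0) b a := by decide
  funext p q
  obtain ⟨k, i⟩ := p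
  obtain ⟨l, j⟩ := q
  rw [Matrix.transpose_apply, matP_apply, matP_apply]
  split_ifs <;> first | rfl | exact hd _ _ | (exfalso; omega)

def NN (m : ℕ) : ℕ := 2 ^ m - 1

abbrev QuotP (m : ℕ) := (Fin (m - 1) × Fin 2 → ℤ) ⧸ LinearMap.range (Matrix.toLin' (matP m))

lemma NN_cast (m : ℕ) : ((NN m : ℕ) : ℤ) = 2 ^ m - 1 := by
  have h : (1:ℕ) ≤ 2 ^ m := Nat.one_le_two_pow
  simp [NN, Nat.cast_sub h]

def wA (m : ℕ) : Fin (m-1) × Fin 2 → ℤ := iota m 0 (fun t => 2 ^ (t+1) - 1)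
def wB (m : ℕ) : Fin (m-1) × Fin 2 → ℤ := iota m 1 (fun t => 2 ^ (m-1-t) - 1)

def phi0 (m : ℕ) : (Fin (m-1) × Fin 2 → ℤ) →ₗ[ℤ] ZMod (NN m) × ZMod (NN m) where
  toFun v := (((wA m ⬝ᵥ v : ℤ) : ZMod (NN m)), ((wB m ⬝ᵥ v : ℤ) : ZMod (NN m)))
  map_add' x y := by
    simp only [dotProduct_add, Int.cast_add, Prod.mk_add_mk]
  map_smul' c x := by
    rw [RingHom.id_apply, dotProduct_smul, dotProduct_smul, Prod.smul_mk]
    simp only [smul_eq_mul, Int.cast_mul, zsmul_eq_mul]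

lemma phi0_apply (m : ℕ) (v : Fin (m-1) × Fin 2 → ℤ) :
    phi0 m v = (((wA m ⬝ᵥ v : ℤ) : ZMod (NN m)), ((wB m ⬝ᵥ v : ℤ) : ZMod (NN m))) := rfl

lemma wA_apply (m : ℕ) (l : Fin (m-1)) : wA m (l, 0) = 2 ^ ((l:ℕ)+1) - 1 := by
  simp [wA, iota]
lemma wA_apply1 (m : ℕ) (l : Fin (m-1)) : wA m (l, 1) = 0 := by
  simp [wA, iota]
lemma wB_apply (m : ℕ) (l : Fin (m-1)) : wB m (l, 1) = 2 ^ (m-1-(l:ℕ)) - 1 := by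
  simp [wB, iota]
lemma wB_apply0 (m : ℕ) (l : Fin (m-1)) : wB m (l, 0) = 0 := by
  simp [wB, iota]

lemma range_le_ker (m : ℕ) (hm : 2 ≤ m) :
    LinearMap.range (Matrix.toLin' (matP m)) ≤ LinearMap.ker (phi0 m) := by
  rintro x ⟨v, rfl⟩
  rw [LinearMap.mem_ker, Matrix.toLin'_apply]
  have hvm : ∀ w : Fin (m-1) × Fin 2 → ℤ, w ᵥ* matP m = matP m *ᵥ w := by
    intro w; nth_rewrite 1 [← Psymm m]; exact Matrix.vecMul_transpose _ _
  have h1 : wA m ⬝ᵥ (matP m *ᵥ v) = ((2:ℤ)^m - 1) * v (⟨m-2, by omega⟩, 1) := by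
    rw [Matrix.dotProduct_mulVec, wA, hvm, eq_A1 m hm, smul_dotProduct,
      single_dotProduct, smul_eq_mul, one_mul]
  have h2 : wB m ⬝ᵥ (matP m *ᵥ v) = ((2:ℤ)^m - 1) * v (⟨0, by omega⟩, 0) := by
    rw [Matrix.dotProduct_mulVec, wB, hvm, eq_A2 m hm, smul_dotProduct,
      single_dotProduct, smul_eq_mul, one_mul]
  have hz : (((2:ℤ)^m - 1 : ℤ) : ZMod (NN m)) = 0 := by
    rw [← NN_cast m]
    exact_mod_cast ZMod.natCast_self (NN m)
  rw [phi0_apply, h1, h2]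
  simp [Prod.ext_iff, Int.cast_mul, hz]

noncomputable def phibar (m : ℕ) (hm : 2 ≤ m) : QuotP m →ₗ[ℤ] ZMod (NN m) × ZMod (NN m) :=
  Submodule.liftQ _ (phi0 m) (range_le_ker m hm)

lemma phibar_mk (m : ℕ) (hm : 2 ≤ m) (u : Fin (m-1) × Fin 2 → ℤ) :
    phibar m hm (Submodule.Quotient.mk u) = phi0 m u := rfl

noncomputable def psiAf (m : ℕ) (hm : 2 ≤ m) : ℤ →+ QuotP m :=
  zmultiplesHom (QuotP m)
    (Submodule.Quotient.mk (Pi.single ((⟨0, by omega⟩ : Fin (m-1)), (0 : Fin 2)) (1:ℤ)))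

lemma psiAf_apply (m : ℕ) (hm : 2 ≤ m) (z : ℤ) :
    psiAf m hm z = z • Submodule.Quotient.mk
      (Pi.single ((⟨0, by omega⟩ : Fin (m-1)), (0 : Fin 2)) (1:ℤ)) := rfl

lemma psiAf_N (m : ℕ) (hm : 2 ≤ m) : psiAf m hm ((NN m : ℕ) : ℤ) = 0 := by
  rw [psiAf_apply, ← Submodule.Quotient.mk_smul, Submodule.Quotient.mk_eq_zero]
  have h : ((NN m : ℕ) : ℤ) • (Pi.single ((⟨0, by omega⟩ : Fin (m-1)), (0 : Fin 2)) (1:ℤ) :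
        Fin (m-1) × Fin 2 → ℤ)
      = ((2:ℤ)^m - 1) • (Pi.single ((⟨0, by omega⟩ : Fin (m-1)), (0 : Fin 2)) (1:ℤ) :
        Fin (m-1) × Fin 2 → ℤ) := by
    rw [NN_cast]
  rw [h]
  exact ⟨iota m 1 (fun t => 2^(m-1-t) - 1), by rw [Matrix.toLin'_apply, eq_A2 m hm]⟩

noncomputable def psiBf (m : ℕ) (hm : 2 ≤ m) : ℤ →+ QuotP m :=
  zmultiplesHom (QuotP m)
    (Submodule.Quotient.mk (Pi.single ((⟨m-2, by omega⟩ : Fin (m-1)), (1 : Fin 2)) (1:ℤ)))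

lemma psiBf_apply (m : ℕ) (hm : 2 ≤ m) (z : ℤ) :
    psiBf m hm z = z • Submodule.Quotient.mk
      (Pi.single ((⟨m-2, by omega⟩ : Fin (m-1)), (1 : Fin 2)) (1:ℤ)) := rfl

lemma psiBf_N (m : ℕ) (hm : 2 ≤ m) : psiBf m hm ((NN m : ℕ) : ℤ) = 0 := by
  rw [psiBf_apply, ← Submodule.Quotient.mk_smul, Submodule.Quotient.mk_eq_zero]
  have h : ((NN m : ℕ) : ℤ) • (Pi.single ((⟨m-2, by omega⟩ : Fin (m-1)), (1 : Fin 2)) (1:ℤ) :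
        Fin (m-1) × Fin 2 → ℤ)
      = ((2:ℤ)^m - 1) • (Pi.single ((⟨m-2, by omega⟩ : Fin (m-1)), (1 : Fin 2)) (1:ℤ) :
        Fin (m-1) × Fin 2 → ℤ) := by
    rw [NN_cast]
  rw [h]
  exact ⟨iota m 0 (fun t => 2^(t+1) - 1), by rw [Matrix.toLin'_apply, eq_A1 m hm]⟩

noncomputable def psiA (m : ℕ) (hm : 2 ≤ m) : ZMod (NN m) →+ QuotP m :=
  ZMod.lift (NN m) ⟨psiAf m hm, psiAf_N m hm⟩

noncomputable def psiB (m : ℕ) (hm : 2 ≤ m) : ZMod (NN m) →+ QuotP m :=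
  ZMod.lift (NN m) ⟨psiBf m hm, psiBf_N m hm⟩

noncomputable def psi (m : ℕ) (hm : 2 ≤ m) : ZMod (NN m) × ZMod (NN m) →+ QuotP m :=
  (psiA m hm).coprod (psiB m hm)

lemma psiA_intCast (m : ℕ) (hm : 2 ≤ m) (z : ℤ) :
    psiA m hm ((z : ℤ) : ZMod (NN m)) = z • Submodule.Quotient.mk
      (Pi.single ((⟨0, by omega⟩ : Fin (m-1)), (0 : Fin 2)) (1:ℤ)) := by
  rw [psiA, ZMod.lift_coe]; rfl

lemma psiB_intCast (m : ℕ) (hm : 2 ≤ m) (z : ℤ) :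
    psiB m hm ((z : ℤ) : ZMod (NN m)) = z • Submodule.Quotient.mk
      (Pi.single ((⟨m-2, by omega⟩ : Fin (m-1)), (1 : Fin 2)) (1:ℤ)) := by
  rw [psiB, ZMod.lift_coe]; rfl

lemma psi_apply (m : ℕ) (hm : 2 ≤ m) (a b : ZMod (NN m)) :
    psi m hm (a, b) = psiA m hm a + psiB m hm b := rfl

lemma psi_phi0 (m : ℕ) (hm : 2 ≤ m) (u : Fin (m-1) × Fin 2 → ℤ) :
    psi m hm (phi0 m u) = Submodule.Quotient.mk u := by
  have key : (psi m hm).toIntLinearMap.comp (phi0 m)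
      = Submodule.mkQ (LinearMap.range (Matrix.toLin' (matP m))) := by
    refine Module.Basis.ext (Pi.basisFun ℤ (Fin (m-1) × Fin 2)) ?_
    rintro ⟨l, j⟩
    simp only [Pi.basisFun_apply, LinearMap.coe_comp, Function.comp_apply,
      AddMonoidHom.coe_toIntLinearMap, Submodule.mkQ_apply]
    fin_cases j <;> beta_reduce <;> simp only [fin2_mk0, fin2_mk1]
    · rw [phi0_apply, dotProduct_single, dotProduct_single, mul_one, mul_one,
        wA_apply, wB_apply0, Int.cast_zero, psi_apply, map_zero, add_zero, psiA_intCast]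
      have h := mem_C1 m hm l
      rw [← Submodule.Quotient.mk_eq_zero, Submodule.Quotient.mk_sub,
        Submodule.Quotient.mk_smul, sub_eq_zero] at h
      exact h.symm
    · rw [phi0_apply, dotProduct_single, dotProduct_single, mul_one, mul_one,
        wA_apply1, wB_apply, Int.cast_zero, psi_apply, map_zero, zero_add, psiB_intCast]
      have h := mem_C2 m hm l
      rw [← Submodule.Quotient.mk_eq_zero, Submodule.Quotient.mk_sub,
        Submodule.Quotient.mk_smul, sub_eq_zero] at h
      exact h.symm
  exact LinearMap.congr_fun key u

lemma phi0_p0 (m : ℕ) (hm : 2 ≤ m) :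
    phi0 m (Pi.single ((⟨0, by omega⟩ : Fin (m-1)), (0 : Fin 2)) (1:ℤ))
      = (1, 0) := by
  rw [phi0_apply, dotProduct_single, dotProduct_single, mul_one, mul_one,
    wA_apply, wB_apply0]
  norm_num

lemma phi0_p1 (m : ℕ) (hm : 2 ≤ m) :
    phi0 m (Pi.single ((⟨m-2, by omega⟩ : Fin (m-1)), (1 : Fin 2)) (1:ℤ))
      = (0, 1) := by
  rw [phi0_apply, dotProduct_single, dotProduct_single, mul_one, mul_one,
    wA_apply1, wB_apply]
  rw [show (⟨m-2, by omega⟩ : Fin (m-1)).val = m - 2 from rfl, show m - 1 - (m-2) = 1 by omega]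
  norm_num

lemma phi_psi (m : ℕ) (hm : 2 ≤ m) (ab : ZMod (NN m) × ZMod (NN m)) :
    phibar m hm (psi m hm ab) = ab := by
  obtain ⟨a, b⟩ := ab
  obtain ⟨za, rfl⟩ := ZMod.intCast_surjective a
  obtain ⟨zb, rfl⟩ := ZMod.intCast_surjective b
  rw [psi_apply, psiA_intCast, psiB_intCast, map_add, map_zsmul, map_zsmul,
    phibar_mk, phibar_mk, phi0_p0 m hm, phi0_p1 m hm]
  simp [Prod.ext_iff, zsmul_eq_mul]

theorem cokernel_equiv (m : ℕ) (hm : 2 ≤ m) :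
    Nonempty (QuotP m ≃+ (ZMod (NN m) × ZMod (NN m))) := by
  refine ⟨{ toFun := phibar m hm, invFun := psi m hm, left_inv := ?_, right_inv := phi_psi m hm,
            map_add' := map_add (phibar m hm) }⟩
  intro q
  obtain ⟨u, rfl⟩ := Submodule.Quotient.mk_surjective _ q
  rw [phibar_mk, psi_phi0]

end CokerP

/-- For `m ≥ 2`, the cokernel `ℤ^{2(m-1)} / P·ℤ^{2(m-1)}` of the linking matrix `P`
(the quotient of `ℤ^{2(m-1)}` by the subgroup generated by the columns of `P`) is
isomorphic as an abelian group to `(ℤ/(2^m - 1)ℤ) ⊕ (ℤ/(2^m - 1)ℤ)`. -/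
theorem cokernel_matP (m : ℕ) (hm : 2 ≤ m) :
    Nonempty
      (((Fin (m - 1) × Fin 2 → ℤ) ⧸ LinearMap.range (Matrix.toLin' (matP m))) ≃+
        (ZMod (2 ^ m - 1) × ZMod (2 ^ m - 1))) := by
  exact CokerP.cokernel_equiv m hm
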